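/- arXiv:1803.00493 — 2 statements merged into one kernel-verified Lean document; each statement's English description precedes it below -/
import Mathlib

section
/- Assume hypothesis (f1), fix λ > 0, w ∈ D ∩ BV(ℝ), and let u ∈ BV(ℝ) be a pointwise limit of a subsequence J_λ^{ε_{ν_j}} w (ε_{ν_j} → 0⁺), so that u solves u + λ f(x,u)_x = w and satisfies the entropy inequality for all smooth convex entropies. If u is discontinuous at a point x₀, with one-sided limits u⁻ = u(x₀−) and u⁺ = u(x₀+), then f(x₀−, u⁻) = f(x₀+, u⁺) =: f̄, and the following entropy conditions hold: (1) if u⁻ < u⁺ and x₀ ≠ 0, then f(x₀,k) ≥ f̄ for all k ∈ [u⁻, u⁺]; (2) if u⁻ > u⁺ and x₀ ≠ 0, then f(x₀,k) ≤ f̄ for all k ∈ [u⁺, u⁻]; (3) if u⁻ < u⁺ and x₀ = 0, then there exists u* ∈ [u⁻, u⁺] such that f_l(k) ≥ f̄ for all k ∈ [u⁻, u*] and f_r(k) ≥ f̄ for all k ∈ [u*, u⁺]; (4) if u⁻ > u⁺ and x₀ = 0, then there exists u* ∈ [u⁺, u⁻] such that f_r(k) ≤ f̄ for all k ∈ [u⁺,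 u*] and f_l(k) ≤ f̄ for all k ∈ [u*, u⁻]. -/
/-!
Test the entropy inequality with C¹ bumps `φ_r` of radius `r` around `x₀`, increasing left of
`x₀`, decreasing right of it, with `φ_r(x₀) = 1`. As `r → 0`, `∫ q(x, u) φ_r'` tends to the jump of
the entropy flux across `x₀`, the zeroth-order term disappears, and the interface term survives
only when `x₀ = 0`. So for every smooth convex `η`, with `g∓ = f(x₀∓, ·)` and `q∓` the
corresponding entropy fluxes,
  `[x₀ = 0] ∫_0^{u(0)} η'' (g₊ - g₋) ≤ q₋(u⁻) - q₊(u⁺)`.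
The entropies `η = ±ω` give the Rankine–Hugoniot condition `g₋(u⁻) = g₊(u⁺) = f̄`. For
`η'' = ρ ≥ 0`, integrating by parts turns the inequality into
  `0 ≤ ∫_{u⁻}^{u(0)} ρ (g₋ - f̄) + ∫_{u(0)}^{u⁺} ρ (g₊ - f̄)`,
and bumps `ρ` supported on either side of `u*`, the clamp of `u(0)` to the interval between `u⁻`
and `u⁺`, give the sign conditions. Away from the interface `g₋ = g₊` and the two pieces merge.
-/

open MeasureTheory Real Set Filter Topology

/-- Hypothesis (f0) on the flux `f`. -/
structure HypF0 (f : ℝ → ℝ → ℝ) : Prop where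
  meas : ∀ ω : ℝ, Measurable fun x => f x ω
  bdd : ∀ ω : ℝ, ∃ C : ℝ, ∀ x, |f x ω| ≤ C
  smooth : ∀ x : ℝ, ContDiff ℝ (⊤ : ℕ∞) (f x)
  lip : ∃ L ≥ (0:ℝ), ∀ x ω₁ ω₂, |f x ω₁ - f x ω₂| ≤ L * |ω₁ - ω₂|
  int0 : ∃ L₁ ≥ (0:ℝ), Integrable (fun x => f x 0) ∧ (∫ x, |f x 0|) ≤ L₁

/-- `u` is a weak solution of the resolvent equation `u + λ[f(x,u) − ε u_x]_x = w`. -/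
def IsWeakSolRes (f : ℝ → ℝ → ℝ) (lam eps : ℝ) (w u : ℝ → ℝ) : Prop :=
  ∀ φ : ℝ → ℝ, ContDiff ℝ 2 φ → HasCompactSupport φ →
    (∫ x, ((u x - w x) / lam * φ x - f x (u x) * deriv φ x
        - eps * u x * deriv (deriv φ) x)) = 0

/-- Hypothesis (f1): `f` satisfies (f0) and is of the piecewise form
`f(x,ω) = f_l(ω)` for `x ≤ 0`, `f(x,ω) = f_r(ω)` for `x > 0`, with `f_l, f_r`
smooth, `f_l(0) = f_r(0) = 0` and `f_l(1) = f_r(1)`. -/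
structure HypF1 (f : ℝ → ℝ → ℝ) (fl fr : ℝ → ℝ) : Prop where
  hf0 : HypF0 f
  piecewise : ∀ x ω : ℝ, f x ω = if x ≤ 0 then fl ω else fr ω
  smooth_l : ContDiff ℝ (⊤ : ℕ∞) fl
  smooth_r : ContDiff ℝ (⊤ : ℕ∞) fr
  zero_l : fl 0 = 0
  zero_r : fr 0 = 0
  one_eq : fl 1 = fr 1

/-- `u` is a weak solution of the (non viscous) resolvent equation
`u + λ f(x,u)_x = w`. -/
def IsWeakSolResNV (f : ℝ → ℝ → ℝ) (lam : ℝ) (w u : ℝ → ℝ) : Prop :=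
  ∀ φ : ℝ → ℝ, ContDiff ℝ 1 φ → HasCompactSupport φ →
    (∫ x, ((u x - w x) / lam * φ x - f x (u x) * deriv φ x)) = 0

/-- The entropy inequality (4.7) for the entropy `η`, in duality with nonnegative
test functions:
`λ δ₀ ∫₀^{u(0)} η''(ω)[f_r(ω) − f_l(ω)] dω + λ q(x,u)_x + η'(u)[u − w] ≤ 0`,
where `q(x,ω) = ∫₀^ω η'(s) ∂_s f(x,s) ds`. -/
def EntropyIneq (fl fr : ℝ → ℝ) (lam : ℝ) (w u : ℝ → ℝ) (η : ℝ → ℝ) : Prop :=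
  ∀ φ : ℝ → ℝ, ContDiff ℝ 1 φ → HasCompactSupport φ → (∀ x, 0 ≤ φ x) →
    lam * φ 0 * (∫ ω in (0:ℝ)..(u 0), deriv (deriv η) ω * (fr ω - fl ω))
      - lam * (∫ x, (if x ≤ 0 then ∫ s in (0:ℝ)..(u x), deriv η s * deriv fl s
                     else ∫ s in (0:ℝ)..(u x), deriv η s * deriv fr s) * deriv φ x)
      + (∫ x, deriv η (u x) * (u x - w x) * φ x) ≤ 0

theorem LocallyBoundedVariationOn.measurable {f : ℝ → ℝ} (h : LocallyBoundedVariationOn f univ) :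
    Measurable f := by
  obtain ⟨p, q, hp, hq, rfl⟩ := h.exists_monotoneOn_sub_monotoneOn
  exact (monotoneOn_univ.1 hp).measurable.sub (monotoneOn_univ.1 hq).measurable

theorem locallyIntegrable_of_abs_le {f : ℝ → ℝ} (hf : AEStronglyMeasurable f) {C : ℝ}
    (hC : ∀ x, |f x| ≤ C) : LocallyIntegrable f :=
  (locallyIntegrable_const C).mono hf (ae_of_all _ fun x => (hC x).trans (le_abs_self C))

theorem MeasureTheory.LocallyIntegrable.bdd_mul {f g : ℝ → ℝ} (hg : LocallyIntegrable g)
    (hf : AEStronglyMeasurable f) {C : ℝ} (hC : ∀ x, |f x| ≤ C) :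
    LocallyIntegrable fun x => f x * g x :=
  locallyIntegrable_iff.2 fun _ hK =>
    (hg.integrableOn_isCompact hK).bdd_mul hf.restrict (ae_of_all _ hC)

theorem MeasureTheory.LocallyIntegrable.intervalIntegrable_mul {Q g : ℝ → ℝ}
    (hQ : LocallyIntegrable Q) (hg : Continuous g) (a b : ℝ) :
    IntervalIntegrable (fun x => Q x * g x) volume a b :=
  (hQ.integrableOn_isCompact isCompact_uIcc).intervalIntegrable.mul_continuousOn hg.continuousOn

noncomputable def posPartSq (t : ℝ) : ℝ := max t 0 ^ 2

theorem hasDerivAt_posPartSq (t : ℝ) : HasDerivAt posPartSq (2 * max t 0) t := by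
  rcases lt_trichotomy t 0 with ht | rfl | ht
  · have h : posPartSq =ᶠ[𝓝 t] fun _ => 0 := by
      filter_upwards [Iio_mem_nhds ht] with s hs
      simp [posPartSq, max_eq_right (le_of_lt (mem_Iio.1 hs))]
    simpa [max_eq_right ht.le] using (hasDerivAt_const t (0 : ℝ)).congr_of_eventuallyEq h
  · rw [hasDerivAt_iff_isLittleO, max_self, mul_zero]
    have hbig : (fun s => posPartSq s) =O[𝓝 0] fun s : ℝ => s ^ 2 :=
      Asymptotics.IsBigO.of_bound 1 (Eventually.of_forall fun s => by
        rw [one_mul, Real.norm_eq_abs, Real.norm_eq_abs, posPartSq, abs_pow, abs_pow]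
        refine pow_le_pow_left₀ (abs_nonneg _) ?_ 2
        rw [abs_of_nonneg (le_max_right _ _)]
        exact max_le (le_abs_self s) (abs_nonneg s))
    simpa [posPartSq] using hbig.trans_isLittleO (Asymptotics.isLittleO_pow_id one_lt_two)
  · have h : posPartSq =ᶠ[𝓝 t] fun s => s ^ 2 := by
      filter_upwards [Ioi_mem_nhds ht] with s hs
      simp [posPartSq, max_eq_left (le_of_lt (mem_Ioi.1 hs))]
    simpa [max_eq_left ht.le, mul_comm] using (hasDerivAt_pow 2 t).congr_of_eventuallyEq h

theorem contDiff_posPartSq : ContDiff ℝ 1 posPartSq := by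
  rw [contDiff_one_iff_deriv]
  refine ⟨fun t => (hasDerivAt_posPartSq t).differentiableAt, ?_⟩
  rw [funext fun t => (hasDerivAt_posPartSq t).deriv]
  fun_prop

noncomputable def bump (x₀ r x : ℝ) : ℝ := posPartSq (1 - ((x - x₀) / r) ^ 2)

section Bump

variable {x₀ r x : ℝ}

theorem hasDerivAt_bump :
    HasDerivAt (bump x₀ r) (-(4 * (x - x₀) / r ^ 2) * max (1 - ((x - x₀) / r) ^ 2) 0) x := by
  have h := (((hasDerivAt_id x).sub_const x₀).div_const r).fun_pow 2 |>.const_sub 1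
  refine ((hasDerivAt_posPartSq _).comp x h).congr_deriv ?_
  simp only [id, Nat.cast_ofNat]
  ring

theorem contDiff_bump : ContDiff ℝ 1 (bump x₀ r) :=
  contDiff_posPartSq.comp (by fun_prop)

theorem bump_nonneg : 0 ≤ bump x₀ r x := sq_nonneg _

theorem bump_le_one : bump x₀ r x ≤ 1 :=
  pow_le_one₀ (le_max_right _ _) (max_le (by nlinarith [sq_nonneg ((x - x₀) / r)]) zero_le_one)

theorem bump_self : bump x₀ r x₀ = 1 := by simp [bump, posPartSq]

theorem one_sub_sq_div_nonpos (hr : 0 < r) (hx : x ∉ Ioo (x₀ - r) (x₀ + r)) :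
    1 - ((x - x₀) / r) ^ 2 ≤ 0 := by
  have : r ≤ |x - x₀| := by
    rw [mem_Ioo, not_and_or, not_lt, not_lt] at hx
    rcases hx with h | h
    · rw [abs_sub_comm]; exact le_abs.2 (Or.inl (by linarith))
    · exact le_abs.2 (Or.inl (by linarith))
  rw [div_pow, sub_nonpos, one_le_div (by positivity), ← sq_abs (x - x₀)]
  gcongr

theorem bump_eq_zero (hr : 0 < r) (hx : x ∉ Ioo (x₀ - r) (x₀ + r)) : bump x₀ r x = 0 := by
  simp [bump, posPartSq, max_eq_right (one_sub_sq_div_nonpos hr hx)]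

theorem deriv_bump_eq_zero (hr : 0 < r) (hx : x ∉ Ioo (x₀ - r) (x₀ + r)) :
    deriv (bump x₀ r) x = 0 := by
  simp [hasDerivAt_bump.deriv, max_eq_right (one_sub_sq_div_nonpos hr hx)]

theorem deriv_bump_nonneg (hx : x ≤ x₀) : 0 ≤ deriv (bump x₀ r) x := by
  rw [hasDerivAt_bump.deriv]
  refine mul_nonneg ?_ (le_max_right _ _)
  rw [neg_nonneg]
  exact div_nonpos_of_nonpos_of_nonneg (by linarith) (sq_nonneg r)

theorem deriv_bump_nonpos (hx : x₀ ≤ x) : deriv (bump x₀ r) x ≤ 0 := by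
  rw [hasDerivAt_bump.deriv]
  refine mul_nonpos_of_nonpos_of_nonneg ?_ (le_max_right _ _)
  rw [neg_nonpos]
  exact div_nonneg (by linarith) (sq_nonneg r)

theorem support_bump_subset (hr : 0 < r) : Function.support (bump x₀ r) ⊆ Ioo (x₀ - r) (x₀ + r) :=
  fun _ hx => by_contra fun h => hx (bump_eq_zero hr h)

theorem support_deriv_bump_subset (hr : 0 < r) :
    Function.support (deriv (bump x₀ r)) ⊆ Ioo (x₀ - r) (x₀ + r) :=
  fun _ hx => by_contra fun h => hx (deriv_bump_eq_zero hr h)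

theorem hasCompactSupport_bump (hr : 0 < r) : HasCompactSupport (bump x₀ r) :=
  HasCompactSupport.of_support_subset_isCompact (isCompact_Icc (a := x₀ - r) (b := x₀ + r))
    ((support_bump_subset hr).trans Ioo_subset_Icc_self)

theorem integral_deriv_bump (a b : ℝ) :
    ∫ x in a..b, deriv (bump x₀ r) x = bump x₀ r b - bump x₀ r a :=
  intervalIntegral.integral_deriv_eq_sub (fun _ _ => hasDerivAt_bump.differentiableAt)
    ((contDiff_bump.continuous_deriv le_rfl).intervalIntegrable _ _)

theorem integral_deriv_bump_left (hr : 0 < r) : ∫ x in (x₀ - r)..x₀, deriv (bump x₀ r) x = 1 := by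
  rw [integral_deriv_bump, bump_self, bump_eq_zero hr (by simp), sub_zero]

theorem integral_deriv_bump_right (hr : 0 < r) :
    ∫ x in x₀..(x₀ + r), deriv (bump x₀ r) x = -1 := by
  rw [integral_deriv_bump, bump_self, bump_eq_zero hr (by simp), zero_sub]

end Bump

theorem abs_intervalIntegral_mul_sub_le {Q ψ : ℝ → ℝ} {a b L ε : ℝ} (hab : a ≤ b)
    (hQψ : IntervalIntegrable (fun x => Q x * ψ x) volume a b)
    (hψ : IntervalIntegrable ψ volume a b) (hψ_nonneg : ∀ x ∈ Ioo a b, 0 ≤ ψ x)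
    (hψ_one : ∫ x in a..b, ψ x = 1) (hQ : ∀ x ∈ Ioo a b, |Q x - L| ≤ ε) :
    |(∫ x in a..b, Q x * ψ x) - L| ≤ ε := by
  have hsub : (∫ x in a..b, Q x * ψ x) - L = ∫ x in a..b, (Q x - L) * ψ x := by
    simp only [sub_mul]
    rw [intervalIntegral.integral_sub hQψ (hψ.const_mul L), intervalIntegral.integral_const_mul,
      hψ_one, mul_one]
  have hbound : ∀ᵐ x, x ∈ Ioc a b → ‖(Q x - L) * ψ x‖ ≤ ε * ψ x := by
    filter_upwards [(Ioo_ae_eq_Ioc (μ := volume) (a := a) (b := b)).mem_iff] with x hx hxab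
    have hxab := hx.2 hxab
    rw [Real.norm_eq_abs, abs_mul, abs_of_nonneg (hψ_nonneg x hxab)]
    exact mul_le_mul_of_nonneg_right (hQ x hxab) (hψ_nonneg x hxab)
  calc |(∫ x in a..b, Q x * ψ x) - L|
      ≤ ∫ x in a..b, ε * ψ x := by
        rw [hsub]; exact intervalIntegral.norm_integral_le_of_norm_le hab hbound (hψ.const_mul ε)
    _ = ε := by rw [intervalIntegral.integral_const_mul, hψ_one, mul_one]

section BumpLimits

variable {Q R : ℝ → ℝ} {x₀ : ℝ}

theorem tendsto_integral_mul_deriv_bump_left {L : ℝ} (hQ : LocallyIntegrable Q)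
    (hL : Tendsto Q (𝓝[<] x₀) (𝓝 L)) :
    Tendsto (fun r => ∫ x in (x₀ - r)..x₀, Q x * deriv (bump x₀ r) x) (𝓝[>] 0) (𝓝 L) := by
  rw [Metric.tendsto_nhds]
  intro ε hε
  obtain ⟨a, ha, hQa⟩ :=
    ((nhdsLT_basis x₀).tendsto_iff Metric.nhds_basis_closedBall).1 hL (ε / 2) (by positivity)
  filter_upwards [Ioo_mem_nhdsGT (sub_pos.2 ha)] with r hr
  have hψ : Continuous (deriv (bump x₀ r)) := contDiff_bump.continuous_deriv le_rfl
  have := abs_intervalIntegral_mul_sub_le (by linarith [hr.1]) (hQ.intervalIntegrable_mul hψ _ _)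
    (hψ.intervalIntegrable _ _) (fun x hx => deriv_bump_nonneg hx.2.le)
    (integral_deriv_bump_left hr.1)
    (fun x hx => Metric.mem_closedBall.1 (hQa x ⟨by linarith [hx.1, hr.2], hx.2⟩))
  rw [Real.dist_eq]
  linarith

theorem tendsto_integral_mul_deriv_bump_right {L : ℝ} (hQ : LocallyIntegrable Q)
    (hL : Tendsto Q (𝓝[>] x₀) (𝓝 L)) :
    Tendsto (fun r => ∫ x in x₀..(x₀ + r), Q x * deriv (bump x₀ r) x) (𝓝[>] 0) (𝓝 (-L)) := by
  rw [Metric.tendsto_nhds]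
  intro ε hε
  obtain ⟨b, hb, hQb⟩ :=
    ((nhdsGT_basis x₀).tendsto_iff Metric.nhds_basis_closedBall).1 hL (ε / 2) (by positivity)
  filter_upwards [Ioo_mem_nhdsGT (sub_pos.2 hb)] with r hr
  have hψ : Continuous fun x => -deriv (bump x₀ r) x := (contDiff_bump.continuous_deriv le_rfl).neg
  have := abs_intervalIntegral_mul_sub_le (a := x₀) (b := x₀ + r) (by linarith [hr.1])
    (hQ.intervalIntegrable_mul hψ _ _) (hψ.intervalIntegrable _ _)
    (fun x hx => neg_nonneg.2 (deriv_bump_nonpos hx.1.le))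
    (by rw [intervalIntegral.integral_neg, integral_deriv_bump_right hr.1, neg_neg])
    (fun x hx => Metric.mem_closedBall.1 (hQb x ⟨hx.1, by linarith [hx.2, hr.2]⟩))
  simp only [mul_neg, intervalIntegral.integral_neg] at this
  rw [Real.dist_eq, sub_neg_eq_add, ← abs_neg, neg_add']
  linarith

theorem tendsto_integral_mul_deriv_bump {Qm Qp : ℝ} (hQ : LocallyIntegrable Q)
    (hQm : Tendsto Q (𝓝[<] x₀) (𝓝 Qm)) (hQp : Tendsto Q (𝓝[>] x₀) (𝓝 Qp)) :
    Tendsto (fun r => ∫ x, Q x * deriv (bump x₀ r) x) (𝓝[>] 0) (𝓝 (Qm - Qp)) := by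
  rw [sub_eq_add_neg]
  refine ((tendsto_integral_mul_deriv_bump_left hQ hQm).add
    (tendsto_integral_mul_deriv_bump_right hQ hQp)).congr' ?_
  filter_upwards [self_mem_nhdsWithin] with r (hr : 0 < r)
  have hψ : Continuous (deriv (bump x₀ r)) := contDiff_bump.continuous_deriv le_rfl
  rw [← intervalIntegral.integral_eq_integral_of_support_subset
      ((Function.support_mul_subset_right _ _).trans
        ((support_deriv_bump_subset hr).trans Ioo_subset_Ioc_self)),
    intervalIntegral.integral_add_adjacent_intervals (hQ.intervalIntegrable_mul hψ _ _)
      (hQ.intervalIntegrable_mul hψ _ _)]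

theorem tendsto_integral_mul_bump (hR : LocallyIntegrable R) :
    Tendsto (fun r => ∫ x, R x * bump x₀ r x) (𝓝[>] 0) (𝓝 0) := by
  have hint : ∀ a b, IntervalIntegrable (fun x => |R x|) volume a b := fun a b =>
    IntegrableOn.intervalIntegrable (hR.integrableOn_isCompact isCompact_uIcc).abs
  have hmass : Tendsto (fun r => ∫ x in (x₀ - r)..(x₀ + r), |R x|) (𝓝[>] 0) (𝓝 0) := by
    have hF := intervalIntegral.continuous_primitive hint x₀
    have hcont : Continuous fun r => (∫ x in x₀..(x₀ + r), |R x|) - ∫ x in x₀..(x₀ - r), |R x| :=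
      (hF.comp (continuous_const_add x₀)).sub (hF.comp (continuous_sub_left x₀))
    simpa [intervalIntegral.integral_interval_sub_left (hint _ _) (hint _ _)] using
      (hcont.tendsto 0).mono_left nhdsWithin_le_nhds
  refine squeeze_zero_norm' ?_ hmass
  filter_upwards [self_mem_nhdsWithin] with r (hr : 0 < r)
  rw [← intervalIntegral.integral_eq_integral_of_support_subset
      ((Function.support_mul_subset_right _ _).trans
        ((support_bump_subset hr).trans Ioo_subset_Ioc_self))]
  refine intervalIntegral.norm_integral_le_of_norm_le (by linarith) (ae_of_all _ fun x _ => ?_)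
    (hint _ _)
  rw [norm_mul, Real.norm_eq_abs, Real.norm_of_nonneg bump_nonneg]
  exact mul_le_of_le_one_right (abs_nonneg _) bump_le_one

theorem tendsto_bump_apply_zero :
    Tendsto (fun r => bump x₀ r 0) (𝓝[>] 0) (𝓝 (if x₀ = 0 then 1 else 0)) := by
  split_ifs with hx₀
  · simp [hx₀, bump_self]
  · refine tendsto_const_nhds.congr' ?_
    filter_upwards [Ioo_mem_nhdsGT (abs_pos.2 hx₀)] with r hr
    refine (bump_eq_zero hr.1 fun h => ?_).symm
    have : |x₀| < r := abs_lt.2 ⟨by linarith [h.2], by linarith [h.1]⟩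
    linarith [hr.2]

end BumpLimits

theorem le_jump_of_forall_test {Q R : ℝ → ℝ} {lam A x₀ Qm Qp : ℝ} (hlam : 0 < lam)
    (hQ : LocallyIntegrable Q) (hR : LocallyIntegrable R)
    (hQm : Tendsto Q (𝓝[<] x₀) (𝓝 Qm)) (hQp : Tendsto Q (𝓝[>] x₀) (𝓝 Qp))
    (H : ∀ φ : ℝ → ℝ, ContDiff ℝ 1 φ → HasCompactSupport φ → (∀ x, 0 ≤ φ x) →
      lam * φ 0 * A - lam * (∫ x, Q x * deriv φ x) + ∫ x, R x * φ x ≤ 0) :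
    (if x₀ = 0 then A else 0) ≤ Qm - Qp := by
  have hlim := ((((tendsto_bump_apply_zero (x₀ := x₀)).const_mul lam).mul_const A).sub
    ((tendsto_integral_mul_deriv_bump hQ hQm hQp).const_mul lam)).add
    (tendsto_integral_mul_bump (x₀ := x₀) hR)
  have hle := le_of_tendsto hlim (eventually_mem_nhdsWithin.mono fun r (hr : 0 < r) =>
    H _ contDiff_bump (hasCompactSupport_bump hr) fun _ => bump_nonneg)
  have : lam * ((if x₀ = 0 then A else 0) - (Qm - Qp)) ≤ 0 := by
    split_ifs at hle ⊢ <;> linarith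
  exact sub_nonpos.1 (nonpos_of_mul_nonpos_right this hlam)

section Piecewise

variable {u Gl Gr : ℝ → ℝ} {x₀ : ℝ}

theorem tendsto_nhdsLT_ite {um : ℝ} (hGl : Continuous Gl) (hGr : Continuous Gr)
    (hum : Tendsto u (𝓝[<] x₀) (𝓝 um)) :
    Tendsto (fun x => if x ≤ 0 then Gl (u x) else Gr (u x)) (𝓝[<] x₀)
      (𝓝 (if x₀ ≤ 0 then Gl um else Gr um)) := by
  split_ifs with hx₀
  · refine ((hGl.tendsto um).comp hum).congr' ?_
    filter_upwards [self_mem_nhdsWithin] with x (hx : x < x₀)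
    simp [hx.le.trans hx₀]
  · refine ((hGr.tendsto um).comp hum).congr' ?_
    filter_upwards [nhdsWithin_le_nhds (Ioi_mem_nhds (not_le.1 hx₀))] with x (hx : 0 < x)
    simp [not_le.2 hx]

theorem tendsto_nhdsGT_ite {up : ℝ} (hGl : Continuous Gl) (hGr : Continuous Gr)
    (hup : Tendsto u (𝓝[>] x₀) (𝓝 up)) :
    Tendsto (fun x => if x ≤ 0 then Gl (u x) else Gr (u x)) (𝓝[>] x₀)
      (𝓝 (if x₀ < 0 then Gl up else Gr up)) := by
  split_ifs with hx₀
  · refine ((hGl.tendsto up).comp hup).congr' ?_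
    filter_upwards [nhdsWithin_le_nhds (Iio_mem_nhds hx₀)] with x (hx : x < 0)
    simp [hx.le]
  · refine ((hGr.tendsto up).comp hup).congr' ?_
    filter_upwards [self_mem_nhdsWithin] with x (hx : x₀ < x)
    simp [(not_lt.1 hx₀).trans_lt hx]

end Piecewise

-- The flux `q(x, ·)` of the entropy `η` on a side of the interface where `f(x, ·) = g`.
noncomputable def entropyFlux (η g : ℝ → ℝ) (v : ℝ) : ℝ :=
  ∫ s in (0 : ℝ)..v, deriv η s * deriv g s

theorem continuous_entropyFlux {η g : ℝ → ℝ} (hη : ContDiff ℝ 1 η) (hg : ContDiff ℝ 1 g) :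
    Continuous (entropyFlux η g) :=
  intervalIntegral.continuous_primitive (fun _ _ =>
    ((hη.continuous_deriv le_rfl).mul (hg.continuous_deriv le_rfl)).intervalIntegrable _ _) 0

/- The entropy inequality localized at a jump with traces `um`, `up`, where `gl`, `gr` are the
fluxes `f(x₀∓, ·)` and `v₀ = u(0)`. The left side is the interface term; it vanishes away from the
interface, where `gl = gr`. -/
def EntropyJumpIneq (gl gr : ℝ → ℝ) (v₀ um up : ℝ) (η : ℝ → ℝ) : Prop :=
  ∫ ω in (0 : ℝ)..v₀, deriv (deriv η) ω * (gr ω - gl ω) ≤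
    entropyFlux η gl um - entropyFlux η gr up

theorem EntropyIneq.entropyJumpIneq {fl fr w u η : ℝ → ℝ} {lam x₀ um up : ℝ} {K : Set ℝ}
    (h : EntropyIneq fl fr lam w u η) (hlam : 0 < lam) (hfl : ContDiff ℝ 1 fl)
    (hfr : ContDiff ℝ 1 fr) (hη : ContDiff ℝ 1 η) (hu : Measurable u) (hK : IsCompact K)
    (huK : ∀ x, u x ∈ K) (hw : LocallyIntegrable w)
    (hum : Tendsto u (𝓝[<] x₀) (𝓝 um)) (hup : Tendsto u (𝓝[>] x₀) (𝓝 up)) :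
    EntropyJumpIneq (if x₀ ≤ 0 then fl else fr) (if x₀ < 0 then fl else fr) (u 0) um up η := by
  have hGl := continuous_entropyFlux hη hfl
  have hGr := continuous_entropyFlux hη hfr
  have hη' : Continuous (deriv η) := hη.continuous_deriv le_rfl
  obtain ⟨Cl, hCl⟩ := hK.exists_bound_of_continuousOn hGl.continuousOn
  obtain ⟨Cr, hCr⟩ := hK.exists_bound_of_continuousOn hGr.continuousOn
  obtain ⟨Cη, hCη⟩ := hK.exists_bound_of_continuousOn hη'.continuousOn
  obtain ⟨M, hM⟩ := hK.exists_bound_of_continuousOn continuousOn_id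
  have hQ : LocallyIntegrable fun x =>
      if x ≤ 0 then entropyFlux η fl (u x) else entropyFlux η fr (u x) := by
    refine locallyIntegrable_of_abs_le (C := max Cl Cr)
      ((hGl.measurable.comp hu).ite measurableSet_Iic (hGr.measurable.comp hu)).aestronglyMeasurable
      fun x => ?_
    split_ifs
    exacts [(hCl _ (huK x)).trans (le_max_left _ _), (hCr _ (huK x)).trans (le_max_right _ _)]
  have hR : LocallyIntegrable fun x => deriv η (u x) * (u x - w x) :=
    ((locallyIntegrable_of_abs_le hu.aestronglyMeasurable fun x => hM _ (huK x)).sub hw).bdd_mul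
      (hη'.measurable.comp hu).aestronglyMeasurable fun x => hCη _ (huK x)
  have key := le_jump_of_forall_test hlam hQ hR (tendsto_nhdsLT_ite hGl hGr hum)
    (tendsto_nhdsGT_ite hGl hGr hup) h
  unfold EntropyJumpIneq
  rcases lt_trichotomy x₀ 0 with hx₀ | rfl | hx₀
  · simpa [hx₀, hx₀.le, hx₀.ne] using key
  · simpa using key
  · simpa [hx₀.ne', not_le.2 hx₀, not_lt.2 hx₀.le] using key

theorem entropyFlux_const_mul {g : ℝ → ℝ} (hg : ContDiff ℝ 1 g) (c v : ℝ) :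
    entropyFlux (fun t => c * t) g v = c * (g v - g 0) := by
  simp only [entropyFlux, deriv_const_mul_id']
  rw [intervalIntegral.integral_const_mul, intervalIntegral.integral_deriv_eq_sub
    (fun x _ => hg.differentiable one_ne_zero x)
    ((hg.continuous_deriv le_rfl).intervalIntegrable _ _)]

theorem EntropyJumpIneq.eq_of_linear {gl gr : ℝ → ℝ} {v₀ um up : ℝ} (hgl : ContDiff ℝ 1 gl)
    (hgr : ContDiff ℝ 1 gr) (h0 : gl 0 = gr 0)
    (h : ∀ c : ℝ, EntropyJumpIneq gl gr v₀ um up fun t => c * t) : gl um = gr up := by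
  have key : ∀ c : ℝ, 0 ≤ c * (gl um - gr up) := fun c => by
    have := h c
    simp only [EntropyJumpIneq, entropyFlux_const_mul hgl, entropyFlux_const_mul hgr, h0,
      deriv_const_mul_id', deriv_const', zero_mul, intervalIntegral.integral_zero] at this
    linarith
  linarith [key 1, key (-1)]

noncomputable def primitive (ρ : ℝ → ℝ) (t : ℝ) : ℝ := ∫ s in (0 : ℝ)..t, ρ s

section Primitive

variable {ρ : ℝ → ℝ}

theorem hasDerivAt_primitive (hρ : Continuous ρ) (t : ℝ) : HasDerivAt (primitive ρ) (ρ t) t :=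
  (hρ.integral_hasStrictDerivAt 0 t).hasDerivAt

theorem deriv_primitive (hρ : Continuous ρ) : deriv (primitive ρ) = ρ :=
  funext fun t => (hasDerivAt_primitive hρ t).deriv

theorem continuous_primitive (hρ : Continuous ρ) : Continuous (primitive ρ) :=
  continuous_iff_continuousAt.2 fun t => (hasDerivAt_primitive hρ t).continuousAt

theorem contDiff_primitive (hρ : ContDiff ℝ (⊤ : ℕ∞) ρ) : ContDiff ℝ (⊤ : ℕ∞) (primitive ρ) :=
  contDiff_infty_iff_deriv.2
    ⟨fun t => (hasDerivAt_primitive hρ.continuous t).differentiableAt,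
      by rwa [deriv_primitive hρ.continuous]⟩

theorem convexOn_primitive_primitive (hρ : Continuous ρ) (hρ_nonneg : ∀ x, 0 ≤ ρ x) :
    ConvexOn ℝ univ (primitive (primitive ρ)) := by
  have hP := continuous_primitive hρ
  refine convexOn_univ_of_deriv2_nonneg (fun t => (hasDerivAt_primitive hP t).differentiableAt)
    ?_ fun x => ?_
  · rw [deriv_primitive hP]
    exact fun t => (hasDerivAt_primitive hρ t).differentiableAt
  · rw [Function.iterate_succ_apply', Function.iterate_one, deriv_primitive hP,
      deriv_primitive hρ]
    exact hρ_nonneg x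

theorem entropyFlux_primitive_primitive (hρ : Continuous ρ) {g : ℝ → ℝ} (hg : ContDiff ℝ 1 g)
    (v : ℝ) :
    entropyFlux (primitive (primitive ρ)) g v =
      primitive ρ v * g v - ∫ s in (0 : ℝ)..v, ρ s * g s := by
  rw [entropyFlux, deriv_primitive (continuous_primitive hρ),
    intervalIntegral.integral_mul_deriv_eq_deriv_mul (fun x _ => hasDerivAt_primitive hρ x)
      (fun x _ => (hg.differentiable one_ne_zero x).hasDerivAt) (hρ.intervalIntegrable _ _)
      ((hg.continuous_deriv le_rfl).intervalIntegrable _ _)]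
  simp [primitive]

end Primitive

theorem EntropyJumpIneq.integral_mul_sub_nonneg {gl gr ρ : ℝ → ℝ} {v₀ um up : ℝ}
    (h : EntropyJumpIneq gl gr v₀ um up (primitive (primitive ρ))) (hρ : Continuous ρ)
    (hgl : ContDiff ℝ 1 gl) (hgr : ContDiff ℝ 1 gr) (hF : gl um = gr up) :
    0 ≤ (∫ s in um..v₀, ρ s * (gl s - gl um)) + ∫ s in v₀..up, ρ s * (gr s - gl um) := by
  have hprim : ∀ {g : ℝ → ℝ}, Continuous g → ∀ a b,
      ∫ s in a..b, g s = (∫ s in (0 : ℝ)..b, g s) - ∫ s in (0 : ℝ)..a, g s := fun hg _ _ =>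
    (intervalIntegral.integral_interval_sub_left (hg.intervalIntegrable _ _)
      (hg.intervalIntegrable _ _)).symm
  have hii : ∀ {g : ℝ → ℝ}, Continuous g → ∀ a b,
      IntervalIntegrable (fun s => ρ s * g s) volume a b := fun hg _ _ =>
    (hρ.mul hg).intervalIntegrable _ _
  have hsplit : ∀ {g : ℝ → ℝ}, Continuous g → ∀ a b, ∫ s in a..b, ρ s * (g s - gl um) =
      (∫ s in (0 : ℝ)..b, ρ s * g s) - (∫ s in (0 : ℝ)..a, ρ s * g s)
        - (gl um * primitive ρ b - gl um * primitive ρ a) := fun hg a b => by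
    simp only [mul_sub]
    rw [intervalIntegral.integral_sub (hii hg a b) (hii continuous_const a b),
      intervalIntegral.integral_mul_const, hprim (g := fun s => ρ s * _) (hρ.mul hg), hprim hρ]
    simp only [primitive]
    ring
  have hjump : ∫ s in (0 : ℝ)..v₀, ρ s * (gr s - gl s) =
      (∫ s in (0 : ℝ)..v₀, ρ s * gr s) - ∫ s in (0 : ℝ)..v₀, ρ s * gl s := by
    simp only [mul_sub]
    exact intervalIntegral.integral_sub (hii hgr.continuous _ _) (hii hgl.continuous _ _)
  rw [EntropyJumpIneq, deriv_primitive (continuous_primitive hρ), deriv_primitive hρ,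
    entropyFlux_primitive_primitive hρ hgl, entropyFlux_primitive_primitive hρ hgr, ← hF,
    hjump] at h
  rw [hsplit hgl.continuous, hsplit hgr.continuous]
  linarith

theorem nonneg_of_forall_integral_mul_nonneg {g : ℝ → ℝ} {U : Set ℝ} (hg : Continuous g)
    (hU : IsOpen U) (H : ∀ ρ : ℝ → ℝ, ContDiff ℝ (⊤ : ℕ∞) ρ → (∀ x, 0 ≤ ρ x) → tsupport ρ ⊆ U →
      0 ≤ ∫ x, ρ x * g x) :
    ∀ k ∈ U, 0 ≤ g k := by
  intro k hk
  by_contra! hneg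
  obtain ⟨δ, hδ, hball⟩ := Metric.isOpen_iff.1 (hU.inter (isOpen_lt hg continuous_const)) k
    ⟨hk, hneg⟩
  let B : ContDiffBump k := ⟨δ / 4, δ / 2, by positivity, by linarith⟩
  have hsupp : tsupport B ⊆ U ∩ {x | g x < 0} := by
    rw [B.tsupport_eq]
    exact (Metric.closedBall_subset_ball (by simp [B]; linarith)).trans hball
  have hpos : 0 < ∫ x, -(B x * g x) := by
    refine Continuous.integral_pos_of_hasCompactSupport_nonneg_nonzero (x := k)
      (B.continuous.mul hg).neg (B.hasCompactSupport.mul_right.neg) (fun x => ?_)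
      (by simp [B.one_of_mem_closedBall (Metric.mem_closedBall_self B.rIn_pos.le), hneg.ne])
    by_cases hx : x ∈ tsupport B
    · exact neg_nonneg.2 (mul_nonpos_of_nonneg_of_nonpos B.nonneg (hsupp hx).2.le)
    · simp [image_eq_zero_of_notMem_tsupport hx]
  rw [integral_neg] at hpos
  linarith [H B B.contDiff (fun _ => B.nonneg) (hsupp.trans inter_subset_left)]

theorem nonneg_on_Icc_of_forall_integral_mul_nonneg {g : ℝ → ℝ} {a b : ℝ} (hg : Continuous g)
    (hab : a < b) (H : ∀ ρ : ℝ → ℝ, ContDiff ℝ (⊤ : ℕ∞) ρ → (∀ x, 0 ≤ ρ x) →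
      tsupport ρ ⊆ Ioo a b → 0 ≤ ∫ x, ρ x * g x) :
    ∀ k ∈ Icc a b, 0 ≤ g k := by
  rw [← closure_Ioo hab.ne]
  exact closure_minimal (nonneg_of_forall_integral_mul_nonneg hg isOpen_Ioo H)
    (isClosed_le continuous_const hg)

section Support

variable {ρ g : ℝ → ℝ} {a b : ℝ}

theorem intervalIntegral_mul_eq_integral (h : tsupport ρ ⊆ Ioc a b) :
    ∫ x in a..b, ρ x * g x = ∫ x, ρ x * g x :=
  intervalIntegral.integral_eq_integral_of_support_subset
    ((Function.support_mul_subset_left _ _).trans ((subset_tsupport ρ).trans h))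

theorem intervalIntegral_mul_eq_zero (h : Disjoint (tsupport ρ) (uIcc a b)) :
    ∫ x in a..b, ρ x * g x = 0 := by
  rw [intervalIntegral.integral_congr (g := fun _ => 0) fun x hx => by
    simp [image_eq_zero_of_notMem_tsupport (h.notMem_of_mem_right hx)]]
  simp

end Support

theorem exists_mem_Icc_nonneg_of_forall_integral_nonneg {gl gr : ℝ → ℝ} {a b c : ℝ}
    (hgl : Continuous gl) (hgr : Continuous gr) (hab : a ≤ b) (ha : 0 ≤ gl a) (hb : 0 ≤ gr b)
    (H : ∀ ρ : ℝ → ℝ, ContDiff ℝ (⊤ : ℕ∞) ρ → (∀ x, 0 ≤ ρ x) →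
      0 ≤ (∫ s in a..c, ρ s * gl s) + ∫ s in c..b, ρ s * gr s) :
    ∃ s ∈ Icc a b, (∀ k ∈ Icc a s, 0 ≤ gl k) ∧ ∀ k ∈ Icc s b, 0 ≤ gr k := by
  refine ⟨max a (min c b), ⟨le_max_left _ _, max_le hab (min_le_right _ _)⟩, ?_, ?_⟩
  · rcases (le_max_left a (min c b)).eq_or_lt with hs | hs
    · rw [← hs, Icc_self]
      exact fun k hk => hk ▸ ha
    replace hs : a < min c b := (lt_max_iff.1 hs).resolve_left (lt_irrefl a)
    rw [max_eq_right hs.le]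
    refine nonneg_on_Icc_of_forall_integral_mul_nonneg hgl hs fun ρ hρ hρ0 hsupp => ?_
    have hright : Disjoint (tsupport ρ) (uIcc c b) :=
      disjoint_left.2 fun x hx hx' => (hsupp hx).2.not_ge hx'.1
    have := H ρ hρ hρ0
    rwa [intervalIntegral_mul_eq_zero hright, add_zero, intervalIntegral_mul_eq_integral
      (hsupp.trans (Ioo_subset_Ioc_self.trans (Ioc_subset_Ioc_right (min_le_left _ _))))] at this
  · rcases (max_le hab (min_le_right c b)).eq_or_lt with hs | hs
    · rw [hs, Icc_self]
      exact fun k hk => hk ▸ hb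
    have hcb : c < b := by
      by_contra! h
      simp [min_eq_right h, max_eq_right hab] at hs
    rw [min_eq_left hcb.le] at hs ⊢
    refine nonneg_on_Icc_of_forall_integral_mul_nonneg hgr hs fun ρ hρ hρ0 hsupp => ?_
    have hleft : Disjoint (tsupport ρ) (uIcc a c) :=
      disjoint_left.2 fun x hx hx' => (hsupp hx).1.not_ge hx'.2
    have := H ρ hρ hρ0
    rwa [intervalIntegral_mul_eq_zero hleft, zero_add, intervalIntegral_mul_eq_integral
      (hsupp.trans (Ioo_subset_Ioc_self.trans (Ioc_subset_Ioc_left (le_max_right _ _))))] at this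

theorem jump_conditions_of_entropyJumpIneq {gl gr : ℝ → ℝ} {v₀ um up : ℝ}
    (hgl : ContDiff ℝ 1 gl) (hgr : ContDiff ℝ 1 gr) (h0 : gl 0 = gr 0)
    (h : ∀ η : ℝ → ℝ, ContDiff ℝ (⊤ : ℕ∞) η → ConvexOn ℝ univ η →
      EntropyJumpIneq gl gr v₀ um up η) :
    gl um = gr up ∧
      (um ≤ up → ∃ s ∈ Icc um up, (∀ k ∈ Icc um s, gl um ≤ gl k) ∧
        ∀ k ∈ Icc s up, gl um ≤ gr k) ∧
      (up ≤ um → ∃ s ∈ Icc up um, (∀ k ∈ Icc up s, gr k ≤ gl um) ∧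
        ∀ k ∈ Icc s um, gl k ≤ gl um) := by
  have hRH : gl um = gr up := EntropyJumpIneq.eq_of_linear hgl hgr h0 fun c =>
    h _ (contDiff_const.mul contDiff_id) ((LinearMap.mul ℝ ℝ c).convexOn convex_univ)
  have hkey : ∀ ρ : ℝ → ℝ, ContDiff ℝ (⊤ : ℕ∞) ρ → (∀ x, 0 ≤ ρ x) →
      0 ≤ (∫ s in um..v₀, ρ s * (gl s - gl um)) + ∫ s in v₀..up, ρ s * (gr s - gl um) :=
    fun ρ hρ hρ0 => (h _ (contDiff_primitive (contDiff_primitive hρ))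
      (convexOn_primitive_primitive hρ.continuous hρ0)).integral_mul_sub_nonneg hρ.continuous
      hgl hgr hRH
  refine ⟨hRH, fun hle => ?_, fun hle => ?_⟩
  · obtain ⟨s, hs, hl, hr⟩ := exists_mem_Icc_nonneg_of_forall_integral_nonneg
      (hgl.continuous.sub continuous_const) (hgr.continuous.sub continuous_const) hle
      (by simp) (by simp [hRH]) hkey
    exact ⟨s, hs, fun k hk => sub_nonneg.1 (hl k hk), fun k hk => sub_nonneg.1 (hr k hk)⟩
  · have hflip : ∀ (g : ℝ → ℝ) (ρ : ℝ → ℝ) (a b : ℝ),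
        ∫ s in a..b, ρ s * (gl um - g s) = ∫ s in b..a, ρ s * (g s - gl um) := fun g ρ a b => by
      rw [intervalIntegral.integral_symm, ← intervalIntegral.integral_neg]
      simp only [mul_sub, neg_sub]
    obtain ⟨s, hs, hl, hr⟩ := exists_mem_Icc_nonneg_of_forall_integral_nonneg
      (gl := fun s => gl um - gr s) (gr := fun s => gl um - gl s) (c := v₀)
      (continuous_const.sub hgr.continuous) (continuous_const.sub hgl.continuous) hle
      (by simp [hRH]) (by simp) fun ρ hρ hρ0 => by
        rw [hflip, hflip, add_comm]
        exact hkey ρ hρ hρ0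
    exact ⟨s, hs, fun k hk => sub_nonneg.1 (hl k hk), fun k hk => sub_nonneg.1 (hr k hk)⟩

theorem ite_lt_eq_ite_le {α : Type*} {x : ℝ} (hx : x ≠ 0) (a b : α) :
    (if x < 0 then a else b) = if x ≤ 0 then a else b := by
  simp only [lt_iff_le_and_ne, hx, ne_eq, not_false_eq_true, and_true]

theorem vanishing_viscosity_jump_conditions_general
    (f : ℝ → ℝ → ℝ) (fl fr : ℝ → ℝ) (hf : HypF1 f fl fr)
    (lam : ℝ) (hlam : 0 < lam)
    (w : ℝ → ℝ) (hw : Integrable w)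
    (u : ℝ → ℝ)
    (huBV : eVariationOn u Set.univ ≠ ⊤) (hu01 : ∀ x, u x ∈ Set.Icc (0:ℝ) 1)
    -- so that `u` solves `u + λ f(x,u)_x = w` and satisfies the entropy inequality
    (hent : ∀ η : ℝ → ℝ, ContDiff ℝ (⊤ : ℕ∞) η → ConvexOn ℝ Set.univ η →
      EntropyIneq fl fr lam w u η)
    -- `u` is discontinuous at `x₀` with one-sided limits `um = u(x₀−)`, `up = u(x₀+)`
    (x₀ um up : ℝ)
    (hum : Tendsto u (𝓝[<] x₀) (𝓝 um)) (hup : Tendsto u (𝓝[>] x₀) (𝓝 up)) :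
    -- conservation of the flux through the jump: `f(x₀−,u⁻) = f(x₀+,u⁺) = f̄`
    ((if x₀ ≤ 0 then fl um else fr um) = (if x₀ < 0 then fl up else fr up)) ∧
    -- 1. upward jump away from the interface
    ((um < up ∧ x₀ ≠ 0) →
      ∀ k ∈ Set.Icc um up, (if x₀ ≤ 0 then fl um else fr um) ≤ f x₀ k) ∧
    -- 2. downward jump away from the interface
    ((up < um ∧ x₀ ≠ 0) →
      ∀ k ∈ Set.Icc up um, f x₀ k ≤ (if x₀ ≤ 0 then fl um else fr um)) ∧
    -- 3. upward jump at the interface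
    ((um < up ∧ x₀ = 0) →
      ∃ us ∈ Set.Icc um up,
        (∀ k ∈ Set.Icc um us, (if x₀ ≤ 0 then fl um else fr um) ≤ fl k) ∧
        (∀ k ∈ Set.Icc us up, (if x₀ ≤ 0 then fl um else fr um) ≤ fr k)) ∧
    -- 4. downward jump at the interface
    ((up < um ∧ x₀ = 0) →
      ∃ us ∈ Set.Icc up um,
        (∀ k ∈ Set.Icc up us, fr k ≤ (if x₀ ≤ 0 then fl um else fr um)) ∧
        (∀ k ∈ Set.Icc us um, fl k ≤ (if x₀ ≤ 0 then fl um else fr um))) := by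
  have hfl : ContDiff ℝ 1 fl := hf.smooth_l.of_le (by exact_mod_cast le_top)
  have hfr : ContDiff ℝ 1 fr := hf.smooth_r.of_le (by exact_mod_cast le_top)
  obtain ⟨hRH, hrise, hfall⟩ := jump_conditions_of_entropyJumpIneq (v₀ := u 0)
    (by split_ifs <;> assumption) (by split_ifs <;> assumption)
    (by split_ifs <;> simp [hf.zero_l, hf.zero_r])
    fun η hη hconv => (hent η hη hconv).entropyJumpIneq hlam hfl hfr
      (hη.of_le (by exact_mod_cast le_top))
      (BoundedVariationOn.locallyBoundedVariationOn huBV).measurable isCompact_Icc hu01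
      hw.locallyIntegrable hum hup
  simp only [hf.piecewise, ← ite_apply]
  refine ⟨hRH, ?_, ?_, ?_, ?_⟩
  · rintro ⟨hlt, hx₀⟩ k hk
    obtain ⟨s, -, hl, hr⟩ := hrise hlt.le
    rcases le_total k s with h | h
    exacts [hl k ⟨hk.1, h⟩, by simpa only [ite_lt_eq_ite_le hx₀] using hr k ⟨h, hk.2⟩]
  · rintro ⟨hlt, hx₀⟩ k hk
    obtain ⟨s, -, hl, hr⟩ := hfall hlt.le
    rcases le_total k s with h | h
    exacts [by simpa only [ite_lt_eq_ite_le hx₀] using hl k ⟨hk.1, h⟩, hr k ⟨h, hk.2⟩]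
  · rintro ⟨hlt, hx₀⟩
    simpa [hx₀] using hrise hlt.le
  · rintro ⟨hlt, hx₀⟩
    simpa [hx₀] using hfall hlt.le

/-- Theorem 4.4 (second part): conservation and entropy conditions at a point of
discontinuity of a vanishing viscosity limit `u` of the resolvents `J_λ^{ε_ν} w`. -/
theorem vanishing_viscosity_jump_conditions
    (f : ℝ → ℝ → ℝ) (fl fr : ℝ → ℝ) (hf : HypF1 f fl fr)
    (lam : ℝ) (hlam : 0 < lam)
    (w : ℝ → ℝ) (hw : Integrable w) (hw01 : ∀ᵐ x, w x ∈ Set.Icc (0:ℝ) 1)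
    (hwBV : eVariationOn w Set.univ ≠ ⊤)
    -- `u` is the pointwise limit of a (sub)sequence of viscous resolvents with
    -- vanishing viscosities
    (ε : ℕ → ℝ) (hεpos : ∀ j, 0 < ε j) (hεlim : Tendsto ε atTop (𝓝 0))
    (U : ℕ → ℝ → ℝ)
    (hU : ∀ j, Integrable (U j) ∧ IsWeakSolRes f lam (ε j) w (U j))
    (u : ℝ → ℝ) (hulim : ∀ x, Tendsto (fun j => U j x) atTop (𝓝 (u x)))
    (huBV : eVariationOn u Set.univ ≠ ⊤) (hu01 : ∀ x, u x ∈ Set.Icc (0:ℝ) 1)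
    -- so that `u` solves `u + λ f(x,u)_x = w` and satisfies the entropy inequality
    (hsol : IsWeakSolResNV f lam w u)
    (hent : ∀ η : ℝ → ℝ, ContDiff ℝ (⊤ : ℕ∞) η → ConvexOn ℝ Set.univ η →
      EntropyIneq fl fr lam w u η)
    -- `u` is discontinuous at `x₀` with one-sided limits `um = u(x₀−)`, `up = u(x₀+)`
    (x₀ um up : ℝ)
    (hum : Tendsto u (𝓝[<] x₀) (𝓝 um)) (hup : Tendsto u (𝓝[>] x₀) (𝓝 up))
    (hjump : um ≠ up) :
    -- conservation of the flux through the jump: `f(x₀−,u⁻) = f(x₀+,u⁺) = f̄`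
    ((if x₀ ≤ 0 then fl um else fr um) = (if x₀ < 0 then fl up else fr up)) ∧
    -- 1. upward jump away from the interface
    ((um < up ∧ x₀ ≠ 0) →
      ∀ k ∈ Set.Icc um up, (if x₀ ≤ 0 then fl um else fr um) ≤ f x₀ k) ∧
    -- 2. downward jump away from the interface
    ((up < um ∧ x₀ ≠ 0) →
      ∀ k ∈ Set.Icc up um, f x₀ k ≤ (if x₀ ≤ 0 then fl um else fr um)) ∧
    -- 3. upward jump at the interface
    ((um < up ∧ x₀ = 0) →
      ∃ us ∈ Set.Icc um up,
        (∀ k ∈ Set.Icc um us, (if x₀ ≤ 0 then fl um else fr um) ≤ fl k) ∧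
        (∀ k ∈ Set.Icc us up, (if x₀ ≤ 0 then fl um else fr um) ≤ fr k)) ∧
    -- 4. downward jump at the interface
    ((up < um ∧ x₀ = 0) →
      ∃ us ∈ Set.Icc up um,
        (∀ k ∈ Set.Icc up us, fr k ≤ (if x₀ ≤ 0 then fl um else fr um)) ∧
        (∀ k ∈ Set.Icc us um, fl k ≤ (if x₀ ≤ 0 then fl um else fr um))) :=
  vanishing_viscosity_jump_conditions_general f fl fr hf lam hlam w hw u huBV hu01 hent x₀ um up hum
    hup
end

section
/- Let f(x,u) = (1/2)(u−1)² for x ≤ 0 and f(x,u) = (1/2)u² for x > 0, and fix ε > 0. Then there is no differentiable, monotonically nonincreasing function U : ℝ → ℝ satisfying ε U'(x) = f(x, U(x)) for all x ∈ ℝ together with the asymptotic conditions lim_{x→−∞} U(x) = 1 and lim_{x→+∞} U(x) = 0. (In other words, the stationary discontinuity selected by the adapted entropy of Audusse–Perthame cannot be realized as the vanishing viscosity limit of a stationary viscous profile.) -/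
open Filter Topology

/-- Example 6.2: for the discontinuous flux `f(x,u) = (1/2)(u−1)²` for `x ≤ 0` and
`f(x,u) = (1/2)u²` for `x > 0`, and any `ε > 0`, there is no differentiable,
monotonically nonincreasing stationary viscous profile `U` with `ε U' = f(x,U)`,
`U(−∞) = 1` and `U(+∞) = 0`.  Hence the stationary discontinuity selected by the
adapted entropy of Audusse–Perthame is not a vanishing viscosity limit of viscous
travelling profiles. -/
theorem no_stationary_viscous_profile (eps : ℝ) (heps : 0 < eps) :
    ¬ ∃ U : ℝ → ℝ,
        Differentiable ℝ U ∧
        (∀ x : ℝ, eps * deriv U x =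
          (if x ≤ 0 then (1/2) * (U x - 1)^2 else (1/2) * (U x)^2)) ∧
        Antitone U ∧
        Tendsto U atBot (𝓝 1) ∧ Tendsto U atTop (𝓝 0) := by
  rintro ⟨U, hdiff, hode, hanti, hbot, htop⟩
  have hmono : Monotone U := by
    apply monotone_of_deriv_nonneg hdiff
    intro x
    have h := hode x
    have h2 : 0 ≤ eps * deriv U x := by
      rw [h]; split <;> positivity
    nlinarith
  have hconst : ∀ x, U x = U 0 := by
    intro x
    rcases le_total x 0 with hx | hx
    · exact le_antisymm (hmono hx) (hanti hx)
    · exact le_antisymm (hanti hx) (hmono hx)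
  have hbot' : Tendsto (fun _ : ℝ => U 0) atBot (𝓝 1) := hbot.congr hconst
  have htop' : Tendsto (fun _ : ℝ => U 0) atTop (𝓝 0) := htop.congr hconst
  have h1 : U 0 = 1 := tendsto_nhds_unique tendsto_const_nhds hbot'
  have h0 : U 0 = 0 := tendsto_nhds_unique tendsto_const_nhds htop'
  rw [h1] at h0
  norm_num at h0
end
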